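/- arXiv:1306.2119 — 7 statements merged into one kernel-verified Lean document; each statement's English description precedes it below -/
import Mathlib

section
/- For all u ≥ 0, e^{-u} + u - 1 ≥ √(u² + (3/2)²) - 3/2. Equivalently, the inverse of the increasing bijection κ(u) = e^{-u} + u - 1 from [0,∞) to [0,∞) satisfies κ⁻¹(v) ≤ √(3v + v²) for all v ≥ 0. -/
/-- For all `u ≥ 0`, `e^{-u} + u - 1 ≥ √(u² + (3/2)²) - 3/2`. -/
theorem self_concordance_kappa_inv_bound (u : ℝ) (hu : 0 ≤ u) :
    Real.exp (-u) + u - 1 ≥ Real.sqrt (u ^ 2 + (3 / 2) ^ 2) - 3 / 2 := by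
  have he : 0 < Real.exp (-u) := Real.exp_pos _
  set e := Real.exp (-u) with hedef
  -- key squared inequality
  have key : u ^ 2 + (3 / 2) ^ 2 ≤ (e + u + 1 / 2) ^ 2 := by
    rcases le_or_gt 2 u with h2 | h2
    · nlinarith [mul_nonneg hu he.le]
    · -- for u ≤ 2 use e^{-u} ≥ (1 - u/4)^4
      have h4 : (0:ℝ) ≤ 1 - u / 4 := by linarith
      have hq : (1 - u / 4) ^ 4 ≤ e := by
        have h1 : 1 - u / 4 ≤ Real.exp (-(u / 4)) := by
          have := Real.add_one_le_exp (-(u / 4))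
          linarith
        calc (1 - u / 4) ^ 4 ≤ Real.exp (-(u / 4)) ^ 4 :=
              pow_le_pow_left₀ h4 h1 4
          _ = e := by
              rw [hedef, ← Real.exp_nat_mul]
              congr 1
              push_cast
              ring
      have hpoly : 0 ≤ (1 - u/4)^8 + (1 - u/4)^4 * (1 + 2*u) + u - 2 := by
        nlinarith [sq_nonneg u, sq_nonneg (u - 1), mul_nonneg hu hu, sq_nonneg (u*(u-1)),
          mul_nonneg (mul_nonneg hu hu) hu, sq_nonneg (u^2*(u-1)), sq_nonneg (u^3),
          mul_nonneg (mul_nonneg (mul_nonneg hu hu) hu) hu]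
      have hq2 : (1 - u/4)^8 ≤ e^2 := by
        have : ((1 - u/4)^4)^2 ≤ e^2 := by
          apply sq_le_sq' (by nlinarith [pow_nonneg h4 4]) hq
        calc (1 - u/4)^8 = ((1 - u/4)^4)^2 := by ring
          _ ≤ e^2 := this
      have hq3 : (1 - u/4)^4 * (1 + 2*u) ≤ e * (1 + 2*u) := by
        apply mul_le_mul_of_nonneg_right hq
        linarith
      nlinarith [hpoly, hq2, hq3]
  have hnn : (0:ℝ) ≤ e + u + 1 / 2 := by linarith
  have hs : Real.sqrt (u ^ 2 + (3 / 2) ^ 2) ≤ e + u + 1 / 2 := by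
    calc Real.sqrt (u ^ 2 + (3 / 2) ^ 2) ≤ Real.sqrt ((e + u + 1 / 2) ^ 2) :=
          Real.sqrt_le_sqrt key
      _ = e + u + 1 / 2 := Real.sqrt_sq hnn
  linarith
end

section
/- For all u ≥ 0, 1 - e^{-u} ≥ u / √(u² + (3/2)²). -/
lemma cubic_le_exp {u : ℝ} (hu : 0 ≤ u) :
    1 + u + u ^ 2 / 2 + u ^ 3 / 6 ≤ Real.exp u := by
  have h := Real.sum_le_exp_of_nonneg hu 4
  simp [Finset.sum_range_succ, Nat.factorial] at h
  nlinarith [h]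

/-- For all `u ≥ 0`, `1 - e^{-u} ≥ u / √(u² + (3/2)²)`. -/
theorem one_sub_exp_neg_ge (u : ℝ) (hu : 0 ≤ u) :
    1 - Real.exp (-u) ≥ u / Real.sqrt (u ^ 2 + (3 / 2) ^ 2) := by
  set s := Real.sqrt (u ^ 2 + (3 / 2) ^ 2) with hs
  have hs2 : s ^ 2 = u ^ 2 + (3 / 2) ^ 2 := Real.sq_sqrt (by positivity)
  have hspos : 0 < s := Real.sqrt_pos.mpr (by positivity)
  have hsu : u < s := by nlinarith
  have hsb : s ≤ u + 3 / 2 := by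
    have h1 : s ≤ Real.sqrt ((u + 3 / 2) ^ 2) :=
      Real.sqrt_le_sqrt (by nlinarith)
    rwa [Real.sqrt_sq (by linarith)] at h1
  have hE : 1 + u + u ^ 2 / 2 + u ^ 3 / 6 ≤ Real.exp u := cubic_le_exp hu
  have hEpos : 0 < Real.exp u := Real.exp_pos u
  rw [ge_iff_le, div_le_iff₀ hspos]
  have key : s ≤ (s - u) * Real.exp u := by
    have h94 : (s - u) * (s + u) = 9 / 4 := by nlinarith
    nlinarith [mul_nonneg hu (sq_nonneg (u - 7/6)), mul_pos hspos hEpos,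
      mul_le_mul_of_nonneg_left hE (le_of_lt (sub_pos.mpr hsu)),
      mul_le_mul_of_nonneg_right hsb (le_of_lt hspos)]
  have : Real.exp (-u) = (Real.exp u)⁻¹ := by rw [Real.exp_neg]
  rw [this]
  have h2 : s * (Real.exp u)⁻¹ ≤ s - u := by
    rw [mul_inv_le_iff₀ hEpos]
    nlinarith [key]
  nlinarith [h2]
end

section
/- Let φ : [0,1] → ℝ be three times continuously differentiable with φ'(0) = 0, φ''(0) = d² > 0, and |φ'''(t)| ≤ S·d·φ''(t) for all t ∈ [0,1], where S > 0. Then φ(1) ≥ φ(0) + (1/S²)(e^{-Sd} + Sd - 1). -/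
/-!
The substitution `t ↦ φ''(t) e^{Sdt}` turns `φ''' ≥ -Sd φ''` into monotonicity, so
`φ''(t) ≥ d² e^{-Sdt}`. The model `ψ(t) = (e^{-Sdt} + Sdt - 1) / S²` has `ψ'' = d² e^{-Sdt}` and
`ψ'(0) = 0 = φ'(0)`, so integrating the comparison `ψ'' ≤ φ''` twice gives
`φ(1) - φ(0) ≥ ψ(1) - ψ(0)`, which is the claim.
-/

open Set Real

theorem monotoneOn_Icc_of_hasDerivAt_nonneg {f f' : ℝ → ℝ} {a b : ℝ}
    (hf : ∀ t ∈ Icc a b, HasDerivAt f (f' t) t) (hf' : ∀ t ∈ Icc a b, 0 ≤ f' t) :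
    MonotoneOn f (Icc a b) :=
  monotoneOn_of_hasDerivWithinAt_nonneg (convex_Icc a b)
    (fun t ht => (hf t ht).continuousAt.continuousWithinAt)
    (fun t ht => (hf t (interior_subset ht)).hasDerivWithinAt)
    (fun t ht => hf' t (interior_subset ht))

theorem sub_le_sub_of_hasDerivAt_le {f f' g g' : ℝ → ℝ} {a b : ℝ} (hab : a ≤ b)
    (hf : ∀ t ∈ Icc a b, HasDerivAt f (f' t) t) (hg : ∀ t ∈ Icc a b, HasDerivAt g (g' t) t)
    (hle : ∀ t ∈ Icc a b, g' t ≤ f' t) :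
    g b - g a ≤ f b - f a := by
  have hmono : MonotoneOn (fun t => f t - g t) (Icc a b) :=
    monotoneOn_Icc_of_hasDerivAt_nonneg (fun t ht => (hf t ht).sub (hg t ht))
      (fun t ht => sub_nonneg.2 (hle t ht))
  have := hmono (left_mem_Icc.2 hab) (right_mem_Icc.2 hab) hab
  linarith

theorem sub_le_sub_of_hasDerivAt_second_le {f f' f'' g g' g'' : ℝ → ℝ} {a b : ℝ} (hab : a ≤ b)
    (hf : ∀ t ∈ Icc a b, HasDerivAt f (f' t) t) (hf' : ∀ t ∈ Icc a b, HasDerivAt f' (f'' t) t)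
    (hg : ∀ t ∈ Icc a b, HasDerivAt g (g' t) t) (hg' : ∀ t ∈ Icc a b, HasDerivAt g' (g'' t) t)
    (ha : g' a ≤ f' a) (hle : ∀ t ∈ Icc a b, g'' t ≤ f'' t) :
    g b - g a ≤ f b - f a := by
  refine sub_le_sub_of_hasDerivAt_le hab hf hg fun t ht => ?_
  have hsub : Icc a t ⊆ Icc a b := Icc_subset_Icc_right ht.2
  have := sub_le_sub_of_hasDerivAt_le ht.1 (fun s hs => hf' s (hsub hs))
    (fun s hs => hg' s (hsub hs)) (fun s hs => hle s (hsub hs))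
  linarith

theorem mul_exp_neg_le_of_neg_mul_le_deriv {u u' : ℝ → ℝ} {k a b : ℝ}
    (hu : ∀ t ∈ Icc a b, HasDerivAt u (u' t) t) (hle : ∀ t ∈ Icc a b, -(k * u t) ≤ u' t)
    {t : ℝ} (ht : t ∈ Icc a b) :
    u a * exp (-(k * (t - a))) ≤ u t := by
  have hexp : ∀ s, HasDerivAt (fun s => exp (k * (s - a))) (exp (k * (s - a)) * k) s := fun s =>
    (((hasDerivAt_id s).sub_const a).const_mul k).exp.congr_deriv (by simp)
  have hmono : MonotoneOn (fun s => u s * exp (k * (s - a))) (Icc a b) :=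
    monotoneOn_Icc_of_hasDerivAt_nonneg (fun s hs => (hu s hs).mul (hexp s))
      (fun s hs => by nlinarith [hle s hs, exp_pos (k * (s - a))])
  have key := hmono (left_mem_Icc.2 (ht.1.trans ht.2)) ht ht.1
  simp only [sub_self, mul_zero, exp_zero, mul_one] at key
  rw [exp_neg, ← div_eq_mul_inv, div_le_iff₀ (exp_pos _)]
  exact key

theorem hasDerivAt_one_sub_exp_neg_mul_div {k : ℝ} (hk : k ≠ 0) (t : ℝ) :
    HasDerivAt (fun t => (1 - exp (-(k * t))) / k) (exp (-(k * t))) t := by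
  have h := (((hasDerivAt_id t).const_mul k).neg.exp.const_sub 1).div_const k
  refine h.congr_deriv ?_
  simp only [id_eq, Pi.neg_apply]
  field_simp

theorem hasDerivAt_exp_neg_mul_add_mul_sub_one_div_sq {k : ℝ} (hk : k ≠ 0) (t : ℝ) :
    HasDerivAt (fun t => (exp (-(k * t)) + k * t - 1) / k ^ 2) ((1 - exp (-(k * t))) / k) t := by
  have h := ((((hasDerivAt_id t).const_mul k).neg.exp.add
    ((hasDerivAt_id t).const_mul k)).sub_const 1).div_const (k ^ 2)
  refine h.congr_deriv ?_
  simp only [id_eq, Pi.neg_apply]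
  field_simp
  ring

theorem self_concordant_taylor_lower_bound_general
    (φ φ' φ'' φ''' : ℝ → ℝ) (d S : ℝ) (hd : 0 < d) (hS : 0 < S)
    (hder1 : ∀ t ∈ Set.Icc (0 : ℝ) 1, HasDerivAt φ (φ' t) t)
    (hder2 : ∀ t ∈ Set.Icc (0 : ℝ) 1, HasDerivAt φ' (φ'' t) t)
    (hder3 : ∀ t ∈ Set.Icc (0 : ℝ) 1, HasDerivAt φ'' (φ''' t) t)
    (h0 : φ' 0 = 0) (h1 : φ'' 0 = d ^ 2)
    (hbound : ∀ t ∈ Set.Icc (0 : ℝ) 1, |φ''' t| ≤ S * d * φ'' t) :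
    φ 1 ≥ φ 0 + (1 / S ^ 2) * (Real.exp (-(S * d)) + S * d - 1) := by
  have hk : S * d ≠ 0 := (mul_pos hS hd).ne'
  have hφ'' : ∀ t ∈ Icc (0 : ℝ) 1, d ^ 2 * exp (-(S * d * t)) ≤ φ'' t := fun t ht => by
    simpa [h1] using mul_exp_neg_le_of_neg_mul_le_deriv hder3
      (fun s hs => neg_le_of_abs_le (hbound s hs)) ht
  have hcomp := sub_le_sub_of_hasDerivAt_second_le zero_le_one hder1 hder2
    (fun t _ => (hasDerivAt_exp_neg_mul_add_mul_sub_one_div_sq hk t).const_mul (d ^ 2))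
    (fun t _ => (hasDerivAt_one_sub_exp_neg_mul_div hk t).const_mul (d ^ 2))
    (by simp [h0]) hφ''
  have hmodel : d ^ 2 * ((exp (-(S * d * 1)) + S * d * 1 - 1) / (S * d) ^ 2)
      - d ^ 2 * ((exp (-(S * d * 0)) + S * d * 0 - 1) / (S * d) ^ 2)
      = 1 / S ^ 2 * (exp (-(S * d)) + S * d - 1) := by
    simp only [mul_one, mul_zero, neg_zero, exp_zero]
    field_simp
    ring
  linarith

/-- One-dimensional self-concordance lower bound: if `φ` is three times continuously
differentiable on `[0,1]` with `φ'(0) = 0`, `φ''(0) = d² > 0` and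
`|φ'''(t)| ≤ S·d·φ''(t)`, then `φ(1) ≥ φ(0) + (1/S²)(e^{-Sd} + Sd - 1)`. -/
theorem self_concordant_taylor_lower_bound
    (φ φ' φ'' φ''' : ℝ → ℝ) (d S : ℝ) (hd : 0 < d) (hS : 0 < S)
    (hder1 : ∀ t ∈ Set.Icc (0 : ℝ) 1, HasDerivAt φ (φ' t) t)
    (hder2 : ∀ t ∈ Set.Icc (0 : ℝ) 1, HasDerivAt φ' (φ'' t) t)
    (hder3 : ∀ t ∈ Set.Icc (0 : ℝ) 1, HasDerivAt φ'' (φ''' t) t)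
    (hcont : ContinuousOn φ''' (Set.Icc (0 : ℝ) 1))
    (h0 : φ' 0 = 0) (h1 : φ'' 0 = d ^ 2)
    (hbound : ∀ t ∈ Set.Icc (0 : ℝ) 1, |φ''' t| ≤ S * d * φ'' t) :
    φ 1 ≥ φ 0 + (1 / S ^ 2) * (Real.exp (-(S * d)) + S * d - 1) :=
  self_concordant_taylor_lower_bound_general φ φ' φ'' φ''' d S hd hS hder1 hder2 hder3 h0 h1 hbound
end

section
/- Let f be three times differentiable on a Euclidean space and suppose |f'''(θ)[δ,δ,η]| ≤ S·f''(θ)[δ,δ]·√⟨η, Hη⟩ for all θ, δ, η, with S ≥ 0, and H = f''(θ*) where f'(θ*)=0. Then for all θ₁, θ₂, Δ: ⟨Δ, f'(θ₂) - f'(θ₁) - f''(θ₁)(θ₂-θ₁)⟩ ≤ S·√⟨Δ, HΔ⟩ · [f(θ₂) - f(θ₁) - ⟨f'(θ₁), θ₂-θ₁⟩]. -/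
/-!
Restrict everything to the segment `t ↦ θ₁ + t • v`, `v = θ₂ - θ₁`. With
`C = S √⟪Δ, H Δ⟫`, the function `D = C ψ - φ`, where `ψ` is the Taylor remainder of `f` and `φ`
that of `⟪Δ, f'⟫`, vanishes to first order at `0`, and `D'' = C f''[v, v] - f'''[v, v, Δ]` is
nonnegative because `f'''` is symmetric in all three arguments (Schwarz for `f'`, and symmetry
of the Hessians), so the self-concordance bound applies with `Δ` in the direction slot.
Hence `D 1 ≥ 0`.
-/

open scoped RealInnerProductSpace

theorem nonneg_of_hasDerivAt_of_second_nonneg {D D' D'' : ℝ → ℝ}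
    (hD : ∀ t, HasDerivAt D (D' t) t) (hD' : ∀ t, HasDerivAt D' (D'' t) t) (hD'' : 0 ≤ D'')
    (h₀ : D 0 = 0) (h₀' : D' 0 = 0) {t : ℝ} (ht : 0 ≤ t) : 0 ≤ D t := by
  have hD'_mono : Monotone D' := monotone_of_hasDerivAt_nonneg hD' hD''
  have hD_mono : MonotoneOn D (Set.Ici 0) := by
    refine monotoneOn_of_hasDerivWithinAt_nonneg (convex_Ici 0)
      (fun s _ ↦ (hD s).continuousAt.continuousWithinAt) (fun s _ ↦ (hD s).hasDerivWithinAt)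
      fun s hs ↦ ?_
    rw [interior_Ici] at hs
    exact h₀' ▸ hD'_mono (le_of_lt hs)
  exact h₀ ▸ hD_mono Set.self_mem_Ici ht ht

section

variable {E G : Type*} [NormedAddCommGroup E] [InnerProductSpace ℝ E]
  [NormedAddCommGroup G] [NormedSpace ℝ G]

theorem hasDerivAt_comp_add_smul {F : E → G} {F' : E → E →L[ℝ] G}
    (hF : ∀ x, HasFDerivAt F (F' x) x) (θ v : E) (t : ℝ) :
    HasDerivAt (fun t : ℝ ↦ F (θ + t • v)) (F' (θ + t • v) v) t := by
  have hline : HasDerivAt (fun t : ℝ ↦ θ + t • v) v t := by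
    simpa using ((hasDerivAt_id t).smul_const v).const_add θ
  exact (hF _).comp_hasDerivAt t hline

theorem isSymmetric_of_hasFDerivAt_of_isSymmetric {H : E → E →L[ℝ] E}
    {H' : E →L[ℝ] E →L[ℝ] E} {θ : E} (hsymm : ∀ y, (H y : E →ₗ[ℝ] E).IsSymmetric)
    (hH : HasFDerivAt H H' θ) (u : E) : (H' u : E →ₗ[ℝ] E).IsSymmetric := by
  intro a b
  let B : E → E → (E →L[ℝ] E) →L[ℝ] ℝ := fun a b ↦
    (innerSL ℝ b).comp (ContinuousLinearMap.apply ℝ E a)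
  have hab : HasFDerivAt (fun y ↦ B a b (H y)) ((B a b).comp H') θ :=
    (B a b).hasFDerivAt.comp θ hH
  have hba : HasFDerivAt (fun y ↦ B a b (H y)) ((B b a).comp H') θ := by
    have hfun : (fun y ↦ B b a (H y)) = fun y ↦ B a b (H y) := by
      funext y
      simp only [B, ContinuousLinearMap.comp_apply, ContinuousLinearMap.apply_apply,
        innerSL_apply_apply]
      rw [real_inner_comm]
      exact hsymm y b a
    exact hfun ▸ (B b a).hasFDerivAt.comp θ hH
  have := congrArg (fun L : E →L[ℝ] ℝ ↦ L u) (hab.unique hba)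
  simpa [B, real_inner_comm] using this

theorem isSymmetric_of_hasGradientAt [CompleteSpace E] {f : E → ℝ} {g : E → E}
    {Hess : E → E →L[ℝ] E} (hg : ∀ θ, HasGradientAt f (g θ) θ)
    (hHess : ∀ θ, HasFDerivAt g (Hess θ) θ) (θ : E) : (Hess θ : E →ₗ[ℝ] E).IsSymmetric := by
  intro a b
  have hf : ∀ y, HasFDerivAt f (innerSL ℝ (g y)) y := fun y ↦ (hg y).hasFDerivAt
  have hf' : HasFDerivAt (fun y ↦ innerSL ℝ (g y)) ((innerSL ℝ).comp (Hess θ)) θ :=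
    (innerSL ℝ).hasFDerivAt.comp θ (hHess θ)
  simpa [real_inner_comm] using second_derivative_symmetric hf hf' a b

theorem inner_taylor_gradient_le_of_inner_third_le [CompleteSpace E] {f : E → ℝ} {g : E → E}
    {Hess : E → E →L[ℝ] E} {T : E → E →L[ℝ] E →L[ℝ] E} (hg : ∀ θ, HasGradientAt f (g θ) θ)
    (hHess : ∀ θ, HasFDerivAt g (Hess θ) θ) (hT : ∀ θ, HasFDerivAt Hess (T θ) θ)
    {θ v Δ : E} {C : ℝ}
    (hthird : ∀ t : ℝ, ⟪Δ, T (θ + t • v) v v⟫ ≤ C * ⟪v, Hess (θ + t • v) v⟫) :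
    ⟪Δ, g (θ + v) - g θ - Hess θ v⟫ ≤ C * (f (θ + v) - f θ - ⟪g θ, v⟫) := by
  let D (t : ℝ) : ℝ := C * (f (θ + t • v) - f θ - t * ⟪g θ, v⟫)
    - (⟪Δ, g (θ + t • v)⟫ - ⟪Δ, g θ⟫ - t * ⟪Δ, Hess θ v⟫)
  let D' (t : ℝ) : ℝ :=
    C * (⟪g (θ + t • v), v⟫ - ⟪g θ, v⟫) - (⟪Δ, Hess (θ + t • v) v⟫ - ⟪Δ, Hess θ v⟫)
  have hD : ∀ t, HasDerivAt D (D' t) t := by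
    intro t
    have hf : HasDerivAt (fun t : ℝ ↦ f (θ + t • v)) ⟪g (θ + t • v), v⟫ t := by
      simpa using hasDerivAt_comp_add_smul (fun y ↦ (hg y).hasFDerivAt) θ v t
    have hΔg : HasDerivAt (fun t : ℝ ↦ ⟪Δ, g (θ + t • v)⟫) ⟪Δ, Hess (θ + t • v) v⟫ t := by
      simpa using (hasDerivAt_const t Δ).inner ℝ (hasDerivAt_comp_add_smul hHess θ v t)
    exact (((hf.sub_const _).sub (hasDerivAt_mul_const _)).const_mul C).sub
      ((hΔg.sub_const _).sub (hasDerivAt_mul_const _))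
  have hD' : ∀ t, HasDerivAt D' (C * ⟪v, Hess (θ + t • v) v⟫ - ⟪Δ, T (θ + t • v) v v⟫) t := by
    intro t
    have hgv : HasDerivAt (fun t : ℝ ↦ ⟪g (θ + t • v), v⟫) ⟪v, Hess (θ + t • v) v⟫ t :=
      ((hasDerivAt_comp_add_smul hHess θ v t).inner ℝ (hasDerivAt_const t v)).congr_deriv
        (by simp [real_inner_comm])
    have hΔH : HasDerivAt (fun t : ℝ ↦ ⟪Δ, Hess (θ + t • v) v⟫) ⟪Δ, T (θ + t • v) v v⟫ t := by
      simpa using (hasDerivAt_const t Δ).inner ℝ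
        ((hasDerivAt_comp_add_smul hT θ v t).clm_apply (hasDerivAt_const t v))
    exact ((hgv.sub_const _).const_mul C).sub (hΔH.sub_const _)
  have h := nonneg_of_hasDerivAt_of_second_nonneg hD hD' (fun t ↦ sub_nonneg.2 (hthird t))
    (by simp [D]) (by simp [D']) zero_le_one
  simp only [D, one_smul, one_mul] at h
  simp only [inner_sub_right]
  linarith

end

theorem gradient_expansion_self_concordant_general
    {E : Type*} [NormedAddCommGroup E] [InnerProductSpace ℝ E] [FiniteDimensional ℝ E]
    (f : E → ℝ) (g : E → E) (Hess : E → E →L[ℝ] E) (T : E → E →L[ℝ] E →L[ℝ] E)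
    (θs : E) (S : ℝ)
    (hg : ∀ θ, HasGradientAt f (g θ) θ)
    (hHess : ∀ θ, HasFDerivAt g (Hess θ) θ)
    (hT : ∀ θ, HasFDerivAt Hess (T θ) θ)
    (hbound : ∀ θ δ η : E,
      |⟪δ, T θ η δ⟫| ≤ S * ⟪δ, Hess θ δ⟫ * Real.sqrt ⟪η, Hess θs η⟫)
    (θ₁ θ₂ Δ : E) :
    ⟪Δ, g θ₂ - g θ₁ - Hess θ₁ (θ₂ - θ₁)⟫
      ≤ S * Real.sqrt ⟪Δ, Hess θs Δ⟫ * (f θ₂ - f θ₁ - ⟪g θ₁, θ₂ - θ₁⟫) := by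
  set v := θ₂ - θ₁
  have hthird (θ : E) : ⟪Δ, T θ v v⟫ ≤ S * Real.sqrt ⟪Δ, Hess θs Δ⟫ * ⟪v, Hess θ v⟫ := by
    have hT_symm : (T θ v : E →ₗ[ℝ] E).IsSymmetric :=
      isSymmetric_of_hasFDerivAt_of_isSymmetric (isSymmetric_of_hasGradientAt hg hHess) (hT θ) v
    calc ⟪Δ, T θ v v⟫ = ⟪v, T θ Δ v⟫ := by
          rw [second_derivative_symmetric hHess (hT θ) Δ v, real_inner_comm]
          exact hT_symm v Δ
      _ ≤ S * ⟪v, Hess θ v⟫ * Real.sqrt ⟪Δ, Hess θs Δ⟫ := (le_abs_self _).trans (hbound θ v Δ)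
      _ = S * Real.sqrt ⟪Δ, Hess θs Δ⟫ * ⟪v, Hess θ v⟫ := by ring
  simpa [v] using inner_taylor_gradient_le_of_inner_third_le (θ := θ₁) hg hHess hT
    fun t ↦ hthird _

/-- Expansion of gradients for generalized self-concordant functions: if
`|f'''(θ)[δ,δ,η]| ≤ S·f''(θ)[δ,δ]·√⟨η,Hη⟩` with `H = f''(θ*)` and `f'(θ*) = 0`, then
`⟨Δ, f'(θ₂) - f'(θ₁) - f''(θ₁)(θ₂-θ₁)⟩ ≤ S·√⟨Δ,HΔ⟩·[f(θ₂) - f(θ₁) - ⟨f'(θ₁),θ₂-θ₁⟩]`. -/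
theorem gradient_expansion_self_concordant
    {E : Type*} [NormedAddCommGroup E] [InnerProductSpace ℝ E] [FiniteDimensional ℝ E]
    (f : E → ℝ) (g : E → E) (Hess : E → E →L[ℝ] E) (T : E → E →L[ℝ] E →L[ℝ] E)
    (θs : E) (S : ℝ) (hS : 0 ≤ S)
    (hg : ∀ θ, HasGradientAt f (g θ) θ)
    (hHess : ∀ θ, HasFDerivAt g (Hess θ) θ)
    (hT : ∀ θ, HasFDerivAt Hess (T θ) θ)
    (hgrad0 : g θs = 0)
    (hbound : ∀ θ δ η : E,
      |⟪δ, T θ η δ⟫| ≤ S * ⟪δ, Hess θ δ⟫ * Real.sqrt ⟪η, Hess θs η⟫)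
    (θ₁ θ₂ Δ : E) :
    ⟪Δ, g θ₂ - g θ₁ - Hess θ₁ (θ₂ - θ₁)⟫
      ≤ S * Real.sqrt ⟪Δ, Hess θs Δ⟫ * (f θ₂ - f θ₁ - ⟪g θ₁, θ₂ - θ₁⟫) :=
  gradient_expansion_self_concordant_general f g Hess T θs S hg hHess hT hbound θ₁ θ₂ Δ
end

section
/- Let f be three times differentiable with |f'''(θ)[δ,δ,δ']| ≤ S·f''(θ)[δ,δ]·√⟨δ', Hδ'⟩, where H is positive definite and S ≥ 0. Then for all θ₁, θ₂, setting d = √⟨θ₂-θ₁, H(θ₂-θ₁)⟩: f(θ₂) - f(θ₁) - ⟨f'(θ₁), θ₂-θ₁⟩ ≤ ⟨θ₂-θ₁, f''(θ₁)(θ₂-θ₁)⟩ · (e^{Sd} - 1 - Sd)/(S²d²). -/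
/-!
Along the segment `t ↦ θ₁ + t • (θ₂ - θ₁)` the self-concordance bound reads `φ''' ≤ S d φ''` for
`φ t = f (θ₁ + t • (θ₂ - θ₁))`, so Grönwall gives `φ'' t ≤ φ'' 0 * exp (S d t)`; integrating this
twice from `0` to `1` bounds the second-order Taylor remainder of `φ` at `1`.
-/

open scoped RealInnerProductSpace
open Set Real

theorem sub_le_sub_of_hasDerivAt_le_s16 {u u' w w' : ℝ → ℝ} {a b : ℝ} (hab : a ≤ b)
    (hu : ∀ s, HasDerivAt u (u' s) s) (hw : ∀ s, HasDerivAt w (w' s) s)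
    (h : ∀ s ∈ Ico a b, u' s ≤ w' s) : u b - u a ≤ w b - w a := by
  have hB : ∀ s, HasDerivAt (fun s => u a + (w s - w a)) (w' s) s := fun s => by
    simpa using ((hw s).sub_const (w a)).const_add (u a)
  have := image_le_of_deriv_right_le_deriv_boundary
    (fun s _ => (hu s).continuousAt.continuousWithinAt) (fun s _ => (hu s).hasDerivWithinAt)
    (by simp) (fun s _ => (hB s).continuousAt.continuousWithinAt)
    (fun s _ => (hB s).hasDerivWithinAt) h ⟨hab, le_rfl⟩
  linarith

theorem le_mul_exp_of_hasDerivAt_le_mul {ψ ψ' : ℝ → ℝ} {k a b : ℝ}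
    (hψ : ∀ s, HasDerivAt ψ (ψ' s) s) (h : ∀ s ∈ Ico a b, ψ' s ≤ k * ψ s) :
    ∀ s ∈ Icc a b, ψ s ≤ ψ a * exp (k * (s - a)) := by
  intro s hs
  have := le_gronwallBound_of_liminf_deriv_right_le (ε := 0)
    (fun s _ => (hψ s).continuousAt.continuousWithinAt)
    (fun s _ _ hr => (hψ s).hasDerivWithinAt.liminf_right_slope_le hr) le_rfl
    (fun s hs => (add_zero (k * ψ s)).symm ▸ h s hs) s hs
  rwa [gronwallBound_ε0] at this

theorem taylor_le_of_deriv_three_le_mul {φ φ₁ φ₂ φ₃ : ℝ → ℝ} {k t : ℝ} (hk : k ≠ 0)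
    (ht : 0 ≤ t) (h₁ : ∀ s, HasDerivAt φ (φ₁ s) s) (h₂ : ∀ s, HasDerivAt φ₁ (φ₂ s) s)
    (h₃ : ∀ s, HasDerivAt φ₂ (φ₃ s) s) (hbound : ∀ s ∈ Ico 0 t, φ₃ s ≤ k * φ₂ s) :
    φ t - φ 0 - t * φ₁ 0 ≤ φ₂ 0 * (exp (k * t) - 1 - k * t) / k ^ 2 := by
  have hexp : ∀ s, HasDerivAt (fun s => exp (k * s) / k) (exp (k * s)) s := fun s => by
    simpa [hk] using ((hasDerivAt_id s).const_mul k).exp.div_const k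
  have hφ₂ : ∀ s ∈ Icc 0 t, φ₂ s ≤ φ₂ 0 * exp (k * s) := by
    simpa only [sub_zero] using le_mul_exp_of_hasDerivAt_le_mul h₃ hbound
  have hφ₁ : ∀ s ∈ Icc 0 t, φ₁ s - φ₁ 0 ≤ φ₂ 0 * ((exp (k * s) - 1) / k) := by
    intro s hs
    have := sub_le_sub_of_hasDerivAt_le_s16 hs.1 h₂ (fun s => (hexp s).const_mul (φ₂ 0))
      fun r hr => hφ₂ r ⟨hr.1, hr.2.le.trans hs.2⟩
    rwa [mul_zero, exp_zero, ← mul_sub, ← sub_div] at this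
  have hw : ∀ s, HasDerivAt (fun s => s * φ₁ 0 + φ₂ 0 * ((exp (k * s) / k - s) / k))
      (φ₁ 0 + φ₂ 0 * ((exp (k * s) - 1) / k)) s := fun s =>
    (((hasDerivAt_id' s).mul_const (φ₁ 0)).add
      ((((hexp s).sub (hasDerivAt_id' s)).div_const k).const_mul (φ₂ 0))).congr_deriv (by ring)
  have := sub_le_sub_of_hasDerivAt_le_s16 ht h₁ hw fun s hs => by
    linarith [hφ₁ s (Ico_subset_Icc_self hs)]
  have hw_sub : t * φ₁ 0 + φ₂ 0 * ((exp (k * t) / k - t) / k)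
      - (0 * φ₁ 0 + φ₂ 0 * ((exp (k * 0) / k - 0) / k))
      = t * φ₁ 0 + φ₂ 0 * (exp (k * t) - 1 - k * t) / k ^ 2 := by
    simp only [mul_zero, exp_zero]
    field_simp
    ring
  linarith

section LineRestriction

variable {E : Type*} [NormedAddCommGroup E] [InnerProductSpace ℝ E] (x v : E) (t : ℝ)

theorem hasDerivAt_line : HasDerivAt (fun t : ℝ => x + t • v) v t :=
  ((hasDerivAt_id t).smul_const v).const_add x |>.congr_deriv (one_smul ℝ v)

theorem HasGradientAt.hasDerivAt_comp_line [CompleteSpace E] {f : E → ℝ} {g : E}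
    (hf : HasGradientAt f g (x + t • v)) :
    HasDerivAt (fun t : ℝ => f (x + t • v)) ⟪v, g⟫ t := by
  simpa [Function.comp_def, real_inner_comm] using
    hf.hasFDerivAt.comp_hasDerivAt t (hasDerivAt_line x v t)

theorem HasFDerivAt.hasDerivAt_inner_comp_line {G : E → E} {G' : E →L[ℝ] E}
    (hG : HasFDerivAt G G' (x + t • v)) :
    HasDerivAt (fun t : ℝ => ⟪v, G (x + t • v)⟫) ⟪v, G' v⟫ t := by
  simpa using (hasDerivAt_const t v).inner ℝ (hG.comp_hasDerivAt t (hasDerivAt_line x v t))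

theorem HasFDerivAt.hasDerivAt_inner_apply_comp_line {A : E → E →L[ℝ] E}
    {A' : E →L[ℝ] E →L[ℝ] E} (hA : HasFDerivAt A A' (x + t • v)) :
    HasDerivAt (fun t : ℝ => ⟪v, A (x + t • v) v⟫) ⟪v, A' v v⟫ t := by
  have hAline : HasDerivAt (fun t : ℝ => A (x + t • v)) (A' v) t :=
    hA.comp_hasDerivAt t (hasDerivAt_line x v t)
  have hAv : HasDerivAt (fun t : ℝ => A (x + t • v) v) (A' v v) t := by
    simpa using hAline.clm_apply (hasDerivAt_const t v)
  simpa using (hasDerivAt_const t v).inner ℝ hAv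

end LineRestriction

theorem function_values_expansion_self_concordant_general
    {E : Type*} [NormedAddCommGroup E] [InnerProductSpace ℝ E] [FiniteDimensional ℝ E]
    (f : E → ℝ) (g : E → E) (Hess : E → E →L[ℝ] E) (T : E → E →L[ℝ] E →L[ℝ] E)
    (H : E →L[ℝ] E) (hHpos : ∀ z : E, z ≠ 0 → 0 < ⟪z, H z⟫)
    (S : ℝ) (hS : 0 < S)
    (hg : ∀ θ, HasGradientAt f (g θ) θ)
    (hHess : ∀ θ, HasFDerivAt g (Hess θ) θ)
    (hT : ∀ θ, HasFDerivAt Hess (T θ) θ)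
    (hbound : ∀ θ δ δ' : E,
      |⟪δ, T θ δ' δ⟫| ≤ S * ⟪δ, Hess θ δ⟫ * Real.sqrt ⟪δ', H δ'⟫)
    (θ₁ θ₂ : E) :
    f θ₂ - f θ₁ - ⟪g θ₁, θ₂ - θ₁⟫
      ≤ ⟪θ₂ - θ₁, Hess θ₁ (θ₂ - θ₁)⟫ *
        (Real.exp (S * Real.sqrt ⟪θ₂ - θ₁, H (θ₂ - θ₁)⟫) - 1
            - S * Real.sqrt ⟪θ₂ - θ₁, H (θ₂ - θ₁)⟫) /
          (S ^ 2 * ⟪θ₂ - θ₁, H (θ₂ - θ₁)⟫) := by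
  obtain rfl | hne := eq_or_ne θ₂ θ₁
  · simp
  set δ := θ₂ - θ₁ with hδ
  have hHδ := hHpos δ (sub_ne_zero.mpr hne)
  set d := √⟪δ, H δ⟫
  have hsq : S ^ 2 * ⟪δ, H δ⟫ = (S * d) ^ 2 := by rw [mul_pow, Real.sq_sqrt hHδ.le]
  have key := taylor_le_of_deriv_three_le_mul (mul_pos hS (Real.sqrt_pos.2 hHδ)).ne' zero_le_one
    (fun t => (hg _).hasDerivAt_comp_line θ₁ δ t)
    (fun t => (hHess _).hasDerivAt_inner_comp_line θ₁ δ t)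
    (fun t => (hT _).hasDerivAt_inner_apply_comp_line θ₁ δ t)
    fun t _ => (le_abs_self _).trans ((hbound _ δ δ).trans_eq (mul_right_comm _ _ _))
  simp only [zero_smul, add_zero, one_smul, hδ, add_sub_cancel, one_mul, mul_one] at key
  rw [hsq, real_inner_comm]
  linarith

/-- Expansion of function values for generalized self-concordant functions: if
`|f'''(θ)[δ,δ,δ']| ≤ S·f''(θ)[δ,δ]·√⟨δ',Hδ'⟩` with `H` positive definite, then with
`d = √⟨θ₂-θ₁, H(θ₂-θ₁)⟩` one has
`f(θ₂) - f(θ₁) - ⟨f'(θ₁),θ₂-θ₁⟩ ≤ ⟨θ₂-θ₁, f''(θ₁)(θ₂-θ₁)⟩·(e^{Sd}-1-Sd)/(S²d²)`. -/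
theorem function_values_expansion_self_concordant
    {E : Type*} [NormedAddCommGroup E] [InnerProductSpace ℝ E] [FiniteDimensional ℝ E]
    (f : E → ℝ) (g : E → E) (Hess : E → E →L[ℝ] E) (T : E → E →L[ℝ] E →L[ℝ] E)
    (H : E →L[ℝ] E) (hHsa : IsSelfAdjoint H) (hHpos : ∀ z : E, z ≠ 0 → 0 < ⟪z, H z⟫)
    (S : ℝ) (hS : 0 < S)
    (hg : ∀ θ, HasGradientAt f (g θ) θ)
    (hHess : ∀ θ, HasFDerivAt g (Hess θ) θ)
    (hT : ∀ θ, HasFDerivAt Hess (T θ) θ)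
    (hbound : ∀ θ δ δ' : E,
      |⟪δ, T θ δ' δ⟫| ≤ S * ⟪δ, Hess θ δ⟫ * Real.sqrt ⟪δ', H δ'⟫)
    (θ₁ θ₂ : E) :
    f θ₂ - f θ₁ - ⟪g θ₁, θ₂ - θ₁⟫
      ≤ ⟪θ₂ - θ₁, Hess θ₁ (θ₂ - θ₁)⟫ *
        (Real.exp (S * Real.sqrt ⟪θ₂ - θ₁, H (θ₂ - θ₁)⟫) - 1
            - S * Real.sqrt ⟪θ₂ - θ₁, H (θ₂ - θ₁)⟫) /
          (S ^ 2 * ⟪θ₂ - θ₁, H (θ₂ - θ₁)⟫) :=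
  function_values_expansion_self_concordant_general f g Hess T H hHpos S hS hg hHess hT hbound θ₁ θ₂
end

section
/- Let f be twice differentiable with positive definite Hessians, θ* a global minimizer with H = f''(θ*), and suppose ⟨Δ, f'(θ₁) - H(θ₁-θ*)⟩ ≤ S·√⟨Δ,HΔ⟩·[f(θ₁)-f(θ*)] for all Δ (gradient expansion at θ*). Then the Newton-type decrement satisfies ⟨f'(θ₁), H⁻¹f'(θ₁)⟩ ≤ ((1/2)S·Δ₁ + √(d₁² + S·d₁·Δ₁ + (1/4)S²Δ₁²))², where Δ₁ = f(θ₁) - f(θ*) and d₁ = √⟨θ₁-θ*, H(θ₁-θ*)⟩. -/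
open scoped RealInnerProductSpace

/-- Newton decrement bound: if `θ*` is a global minimizer of a twice differentiable `f`
with positive definite Hessians, `H = f''(θ*)` with inverse `Hinv`, and the gradient
expansion at `θ*` holds, then
`⟨f'(θ₁), H⁻¹f'(θ₁)⟩ ≤ ((1/2)SΔ₁ + √(d₁² + Sd₁Δ₁ + (1/4)S²Δ₁²))²` where
`Δ₁ = f(θ₁) - f(θ*)` and `d₁ = √⟨θ₁-θ*, H(θ₁-θ*)⟩`. -/
theorem newton_decrement_bound
    {E : Type*} [NormedAddCommGroup E] [InnerProductSpace ℝ E] [FiniteDimensional ℝ E]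
    (f : E → ℝ) (g : E → E) (Hess : E → E →L[ℝ] E)
    (θs : E) (S : ℝ) (hS : 0 ≤ S)
    (hg : ∀ θ, HasGradientAt f (g θ) θ)
    (hHess : ∀ θ, HasFDerivAt g (Hess θ) θ)
    (hHsa : ∀ θ, IsSelfAdjoint (Hess θ))
    (hHpos : ∀ θ, ∀ z : E, z ≠ 0 → 0 < ⟪z, Hess θ z⟫)
    (hmin : ∀ θ, f θs ≤ f θ)
    (Hinv : E →L[ℝ] E)
    (hinv1 : Hinv ∘L Hess θs = ContinuousLinearMap.id ℝ E)
    (hinv2 : Hess θs ∘L Hinv = ContinuousLinearMap.id ℝ E)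
    (θ₁ : E)
    (hexp : ∀ Δ : E, ⟪Δ, g θ₁ - Hess θs (θ₁ - θs)⟫
      ≤ S * Real.sqrt ⟪Δ, Hess θs Δ⟫ * (f θ₁ - f θs)) :
    ⟪g θ₁, Hinv (g θ₁)⟫
      ≤ ((1 / 2) * S * (f θ₁ - f θs)
          + Real.sqrt (⟪θ₁ - θs, Hess θs (θ₁ - θs)⟫
              + S * Real.sqrt ⟪θ₁ - θs, Hess θs (θ₁ - θs)⟫ * (f θ₁ - f θs)
              + (1 / 4) * S ^ 2 * (f θ₁ - f θs) ^ 2)) ^ 2 := by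
  classical
  set H := Hess θs with hHdef
  have hsymm : ∀ x y : E, ⟪H x, y⟫ = ⟪x, H y⟫ := fun x y =>
    (hHsa θs).isSymmetric x y
  have hnn : ∀ z : E, 0 ≤ ⟪z, H z⟫ := by
    intro z
    by_cases hz : z = 0
    · simp [hz]
    · exact (hHpos θs z hz).le
  -- Cauchy–Schwarz for the bilinear form ⟪·, H ·⟫
  have hCS : ∀ x y : E, ⟪x, H y⟫ ≤ Real.sqrt ⟪x, H x⟫ * Real.sqrt ⟪y, H y⟫ := by
    intro x y
    by_cases hy : y = 0
    · simp [hy]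
    · have hb : 0 < ⟪y, H y⟫ := hHpos θs y hy
      set c := ⟪x, H y⟫ with hc
      have hyx : ⟪y, H x⟫ = c := by rw [← hsymm, real_inner_comm]
      have key : 0 ≤ ⟪x - (c / ⟪y, H y⟫) • y, H (x - (c / ⟪y, H y⟫) • y)⟫ := hnn _
      have hexpand : ⟪x - (c / ⟪y, H y⟫) • y, H (x - (c / ⟪y, H y⟫) • y)⟫
          = ⟪x, H x⟫ - c ^ 2 / ⟪y, H y⟫ := by
        rw [map_sub, map_smul, inner_sub_left, inner_sub_right, inner_sub_right,
          inner_smul_left, inner_smul_right, inner_smul_left, inner_smul_right, hyx]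
        simp only [RCLike.star_def, starRingEnd_apply, star_trivial]
        field_simp
        ring
      have hsq : c ^ 2 ≤ ⟪x, H x⟫ * ⟪y, H y⟫ := by
        rw [hexpand] at key
        have := (div_le_iff₀ hb).mp (by linarith : c ^ 2 / ⟪y, H y⟫ ≤ ⟪x, H x⟫)
        linarith
      calc c ≤ |c| := le_abs_self c
        _ = Real.sqrt (c ^ 2) := (Real.sqrt_sq_eq_abs c).symm
        _ ≤ Real.sqrt (⟪x, H x⟫ * ⟪y, H y⟫) := Real.sqrt_le_sqrt hsq
        _ = Real.sqrt ⟪x, H x⟫ * Real.sqrt ⟪y, H y⟫ := Real.sqrt_mul (hnn x) _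
  set u := g θ₁ with hudef
  set w := θ₁ - θs with hwdef
  set v := Hinv u with hvdef
  have hHv : H v = u := by
    have := ContinuousLinearMap.ext_iff.mp hinv2 u
    simpa using this
  have huv : ⟪u, v⟫ = ⟪v, H v⟫ := by rw [hHv, real_inner_comm]
  set Δ₁ := f θ₁ - f θs with hΔdef
  have hΔnn : 0 ≤ Δ₁ := by simp [hΔdef, hmin θ₁]
  set lam := Real.sqrt ⟪u, v⟫ with hlamdef
  have hlam_nn : 0 ≤ lam := Real.sqrt_nonneg _
  have hlam_sq : lam ^ 2 = ⟪u, v⟫ := Real.sq_sqrt (huv ▸ hnn v)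
  set d₁ := Real.sqrt ⟪w, H w⟫ with hddef
  have hd_nn : 0 ≤ d₁ := Real.sqrt_nonneg _
  have hd_sq : d₁ ^ 2 = ⟪w, H w⟫ := Real.sq_sqrt (hnn w)
  -- decomposition and bounds
  have hdecomp : ⟪u, v⟫ = ⟪v, u - H w⟫ + ⟪v, H w⟫ := by
    rw [inner_sub_right, real_inner_comm]
    ring
  have hbound1 : ⟪v, u - H w⟫ ≤ S * lam * Δ₁ := by
    have := hexp v
    rwa [← huv, ← hlamdef] at this
  have hbound2 : ⟪v, H w⟫ ≤ lam * d₁ := by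
    have := hCS v w
    rwa [← huv, ← hlamdef, ← hddef] at this
  have hmain : lam ^ 2 ≤ lam * (S * Δ₁ + d₁) := by
    rw [hlam_sq, hdecomp]
    nlinarith [hbound1, hbound2]
  -- simplify the right-hand side
  have hsqrt : Real.sqrt (⟪w, H w⟫ + S * d₁ * Δ₁ + (1 / 4) * S ^ 2 * Δ₁ ^ 2)
      = d₁ + (1 / 2) * S * Δ₁ := by
    have : ⟪w, H w⟫ + S * d₁ * Δ₁ + (1 / 4) * S ^ 2 * Δ₁ ^ 2
        = (d₁ + (1 / 2) * S * Δ₁) ^ 2 := by rw [← hd_sq]; ring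
    rw [this, Real.sqrt_sq (by positivity)]
  have hM : lam ^ 2 ≤ (S * Δ₁ + d₁) ^ 2 := by
    nlinarith [hmain, sq_nonneg (lam - (S * Δ₁ + d₁)), hlam_nn,
      mul_nonneg (mul_nonneg hS hΔnn) hd_nn]
  calc ⟪u, v⟫ = lam ^ 2 := hlam_sq.symm
    _ ≤ (S * Δ₁ + d₁) ^ 2 := hM
    _ = ((1 / 2) * S * Δ₁ + (d₁ + (1 / 2) * S * Δ₁)) ^ 2 := by ring
    _ = _ := by rw [← hsqrt]
end

section
/- For all t ≥ 0: (1/2)t + √((3+t²) + t√(3+t²) + (1/4)t²) ≤ √3 + 2t. -/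
/-- For all `t ≥ 0`: `(1/2)t + √((3+t²) + t√(3+t²) + (1/4)t²) ≤ √3 + 2t`. -/
theorem square_one_bound (t : ℝ) (ht : 0 ≤ t) :
    (1 / 2) * t + Real.sqrt ((3 + t ^ 2) + t * Real.sqrt (3 + t ^ 2) + (1 / 4) * t ^ 2)
      ≤ Real.sqrt 3 + 2 * t := by
  have h3 : (0:ℝ) ≤ 3 + t ^ 2 := by positivity
  set s := Real.sqrt (3 + t ^ 2) with hs
  have hsnn : 0 ≤ s := Real.sqrt_nonneg _
  have hsq : s ^ 2 = 3 + t ^ 2 := Real.sq_sqrt h3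
  have key : (3 + t ^ 2) + t * s + (1 / 4) * t ^ 2 = (s + t / 2) ^ 2 := by
    ring_nf
    nlinarith [hsq]
  rw [key, Real.sqrt_sq (by positivity)]
  have hle : s ≤ Real.sqrt 3 + t := by
    rw [hs]
    have : 3 + t ^ 2 ≤ (Real.sqrt 3 + t) ^ 2 := by
      have h3' : Real.sqrt 3 ^ 2 = 3 := Real.sq_sqrt (by norm_num)
      nlinarith [Real.sqrt_nonneg (3:ℝ)]
    calc Real.sqrt (3 + t ^ 2) ≤ Real.sqrt ((Real.sqrt 3 + t) ^ 2) :=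
          Real.sqrt_le_sqrt this
      _ = Real.sqrt 3 + t := Real.sqrt_sq (by positivity)
  linarith
end
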